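/- Let δ ≥ 3 be an odd integer and let V(q) = Σ_{h=0}^{δ} v_h·C(δ,h)·q_1^h·q_2^{δ−h} be a homogeneous real polynomial of degree δ that is not identically zero. Then there exists ψ ∈ [0, 2π) such that, writing V(σ(ψ)^{-1}q) = Σ_{h=0}^{δ} v′_h·C(δ,h)·q_1^h·q_2^{δ−h}, the rotated coefficients satisfy (v′_0 − v′_2)² + (v′_1)² ≠ 0. -/

import Mathlib

open MvPolynomial Finset

noncomputable section

/-- the homogeneous polynomial `V(q) = Σ_{h=0}^{δ} v_h C(δ,h) q₁^h q₂^{δ-h}` -/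
def Vhom (δ : ℕ) (v : ℕ → ℝ) : MvPolynomial (Fin 2) ℝ :=
  ∑ h ∈ Finset.range (δ + 1), C (v h * (δ.choose h : ℝ)) * X 0 ^ h * X 1 ^ (δ - h)

/-- the change of variables `q ↦ σ(ψ)⁻¹ q` applied to a polynomial in `(q₁,q₂)`,
where `σ(ψ)` is the rotation matrix `((cos ψ, -sin ψ),(sin ψ, cos ψ))` -/
def rot2 (ψ : ℝ) (P : MvPolynomial (Fin 2) ℝ) : MvPolynomial (Fin 2) ℝ :=
  MvPolynomial.aeval
    ![C (Real.cos ψ) * X 0 + C (Real.sin ψ) * X 1,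
      C (-Real.sin ψ) * X 0 + C (Real.cos ψ) * X 1] P

/-- the `2 × (δ-1)` matrix `M` whose (1-based) `a`-th column is `(v_{a-1} - v_{a+1}, 2 v_a)` -/
def Mmat (δ : ℕ) (v : ℕ → ℝ) : Matrix (Fin 2) (Fin (δ - 1)) ℝ :=
  Matrix.of fun i j => if i = 0 then v j.1 - v (j.1 + 2) else 2 * v (j.1 + 1)

/-- the restriction of `Vhom δ w` to the unit circle, as a function of the angle -/
def Tfun (δ : ℕ) (w : ℕ → ℝ) (θ : ℝ) : ℝ :=
  ∑ h ∈ Finset.range (δ + 1),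
    w h * (δ.choose h : ℝ) * Real.sin θ ^ h * Real.cos θ ^ (δ - h)

/-- the derivative of `Tfun` -/
def T1fun (δ : ℕ) (w : ℕ → ℝ) (θ : ℝ) : ℝ :=
  ∑ h ∈ Finset.range (δ + 1),
    (w h * (δ.choose h : ℝ) * ((h : ℝ) * Real.sin θ ^ (h - 1) * Real.cos θ) *
        Real.cos θ ^ (δ - h) +
      w h * (δ.choose h : ℝ) * Real.sin θ ^ h *
        ((↑(δ - h) : ℝ) * Real.cos θ ^ (δ - h - 1) * (-Real.sin θ)))

lemma hasDerivAt_Tfun (δ : ℕ) (w : ℕ → ℝ) (θ : ℝ) :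
    HasDerivAt (Tfun δ w) (T1fun δ w θ) θ := by
  have H : HasDerivAt (fun θ : ℝ => ∑ h ∈ Finset.range (δ + 1),
      w h * (δ.choose h : ℝ) * Real.sin θ ^ h * Real.cos θ ^ (δ - h)) (T1fun δ w θ) θ := by
    apply HasDerivAt.fun_sum
    intro h _
    exact (((Real.hasDerivAt_sin θ).pow h).const_mul (w h * (δ.choose h : ℝ))).mul
      ((Real.hasDerivAt_cos θ).pow (δ - h))
  exact H

lemma Tfun_zero (δ : ℕ) (w : ℕ → ℝ) : Tfun δ w 0 = w 0 := by
  rw [Tfun, Finset.sum_eq_single 0]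
  · simp
  · intro h _ hne
    simp [zero_pow hne]
  · intro hn
    exact absurd (Finset.mem_range.2 (by omega)) hn

lemma Tfun_pi (δ : ℕ) (w : ℕ → ℝ) (hodd : Odd δ) : Tfun δ w Real.pi = -(w 0) := by
  rw [Tfun, Finset.sum_eq_single 0]
  · simp [Real.cos_pi, hodd.neg_one_pow]
  · intro h _ hne
    simp [Real.sin_pi, zero_pow hne]
  · intro hn
    exact absurd (Finset.mem_range.2 (by omega)) hn

lemma T1fun_zero (δ : ℕ) (w : ℕ → ℝ) (hδ : 1 ≤ δ) : T1fun δ w 0 = (δ : ℝ) * w 1 := by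
  rw [T1fun, Finset.sum_eq_single 1]
  · simp [Nat.choose_one_right]
    ring
  · intro h _ hne
    rcases h with _ | _ | h
    · simp
    · exact absurd rfl hne
    · simp [zero_pow]
  · intro hn
    exact absurd (Finset.mem_range.2 (by omega)) hn

lemma T1fun_periodic (δ : ℕ) (w : ℕ → ℝ) :
    Function.Periodic (T1fun δ w) (2 * Real.pi) := by
  intro θ
  rw [T1fun, T1fun]
  simp [Real.sin_add_two_pi, Real.cos_add_two_pi]

lemma aeval_Vhom (δ : ℕ) (w : ℕ → ℝ) (θ : ℝ) :
    aeval ![Real.sin θ, Real.cos θ] (Vhom δ w) = Tfun δ w θ := by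
  rw [Vhom, Tfun, map_sum]
  refine Finset.sum_congr rfl fun h _ => ?_
  simp [aeval_C]

lemma eval_Vhom (δ : ℕ) (w : ℕ → ℝ) (p : Fin 2 → ℝ) :
    eval p (Vhom δ w) = ∑ h ∈ Finset.range (δ + 1),
      w h * (δ.choose h : ℝ) * p 0 ^ h * p 1 ^ (δ - h) := by
  rw [Vhom, map_sum]
  refine Finset.sum_congr rfl fun h _ => ?_
  simp

lemma key (δ : ℕ) (v v' : ℕ → ℝ) (ψ : ℝ) (E : rot2 ψ (Vhom δ v) = Vhom δ v') (φ : ℝ) :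
    Tfun δ v (ψ + φ) = Tfun δ v' φ := by
  have h1 := congrArg (aeval ![Real.sin φ, Real.cos φ]) E
  rw [aeval_Vhom, rot2, comp_aeval_apply] at h1
  rw [← h1, ← aeval_Vhom δ v (ψ + φ)]
  have hfun : (![Real.sin (ψ + φ), Real.cos (ψ + φ)] : Fin 2 → ℝ)
      = fun i => aeval ![Real.sin φ, Real.cos φ]
        (![C (Real.cos ψ) * X 0 + C (Real.sin ψ) * X 1,
           C (-Real.sin ψ) * X 0 + C (Real.cos ψ) * X 1] i) := by
    funext i
    fin_cases i
    · simp [Real.sin_add]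
      ring
    · simp [Real.cos_add]
      ring
  rw [hfun]

/-- For odd `δ ≥ 3` and a nonzero homogeneous `V` of degree `δ`, there
is a rotation angle `ψ ∈ [0, 2π)` such that the rotated coefficients satisfy
`(v'₀ - v'₂)² + (v'₁)² ≠ 0`. -/
theorem statement18 (δ : ℕ) (hδ : 3 ≤ δ) (hodd : Odd δ) (v : ℕ → ℝ)
    (hV : Vhom δ v ≠ 0) :
    ∃ ψ ∈ Set.Ico (0 : ℝ) (2 * Real.pi), ∀ v' : ℕ → ℝ,
      rot2 ψ (Vhom δ v) = Vhom δ v' → (v' 0 - v' 2) ^ 2 + (v' 1) ^ 2 ≠ 0 := by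
  by_contra hcon
  push_neg at hcon
  have pi_pos := Real.pi_pos
  -- step 1: the derivative of `Tfun δ v` vanishes on `[0, 2π)`
  have hT1 : ∀ ψ ∈ Set.Ico (0:ℝ) (2*Real.pi), T1fun δ v ψ = 0 := by
    intro ψ hψ
    obtain ⟨v', hE, hsq⟩ := hcon ψ hψ
    have hv1 : v' 1 = 0 := by nlinarith [sq_nonneg (v' 0 - v' 2), sq_nonneg (v' 1)]
    have hk := key δ v v' ψ hE
    have heq : Tfun δ v = fun θ => Tfun δ v' (θ - ψ) := by
      funext θ
      have h2 := hk (θ - ψ)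
      rw [show ψ + (θ - ψ) = θ by ring] at h2
      rw [h2]
    have hD : HasDerivAt (Tfun δ v) (T1fun δ v' 0 * 1) ψ := by
      rw [heq]
      have hf : HasDerivAt (fun θ : ℝ => θ - ψ) 1 ψ := (hasDerivAt_id ψ).sub_const ψ
      have hg : HasDerivAt (Tfun δ v') (T1fun δ v' 0) ((fun θ : ℝ => θ - ψ) ψ) := by
        simpa using hasDerivAt_Tfun δ v' 0
      have := HasDerivAt.comp (h := fun θ : ℝ => θ - ψ) (h₂ := Tfun δ v') ψ hg hf
      exact this
    have hu := (hasDerivAt_Tfun δ v ψ).unique hD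
    rw [hu, T1fun_zero δ v' (by omega), hv1]
    ring
  -- step 2: by periodicity, the derivative vanishes everywhere
  have hT1all : ∀ θ, T1fun δ v θ = 0 := by
    intro θ
    obtain ⟨y, hy, hxy⟩ := (T1fun_periodic δ v).exists_mem_Ico₀ (by positivity) θ
    rw [hxy]
    exact hT1 y hy
  -- step 3: `Tfun δ v` is constant
  have hdiff : Differentiable ℝ (Tfun δ v) := fun θ => (hasDerivAt_Tfun δ v θ).differentiableAt
  have hconst : ∀ θ, Tfun δ v θ = Tfun δ v 0 := fun θ =>
    is_const_of_deriv_eq_zero hdiff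
      (fun x => by rw [(hasDerivAt_Tfun δ v x).deriv]; exact hT1all x) θ 0
  -- step 4: since δ is odd, the constant is 0
  have hzero : ∀ θ, Tfun δ v θ = 0 := by
    have hpi : Tfun δ v Real.pi = Tfun δ v 0 := hconst _
    rw [Tfun_pi δ v hodd, Tfun_zero] at hpi
    intro θ
    rw [hconst θ, Tfun_zero]
    linarith
  -- step 5: conclude `Vhom δ v = 0`, a contradiction
  apply hV
  apply MvPolynomial.funext
  intro p
  rw [map_zero, eval_Vhom]
  rcases eq_or_ne (p 0 ^ 2 + p 1 ^ 2) 0 with hp | hp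
  · have h0 : p 0 = 0 := by nlinarith [sq_nonneg (p 0), sq_nonneg (p 1)]
    have h1 : p 1 = 0 := by nlinarith [sq_nonneg (p 0), sq_nonneg (p 1)]
    apply Finset.sum_eq_zero
    intro h _
    rcases Nat.eq_zero_or_pos h with rfl | hpos
    · rw [h1, zero_pow (by omega : δ - 0 ≠ 0)]
      ring
    · rw [h0, zero_pow (by omega : h ≠ 0)]
      ring
  · set z : ℂ := ⟨p 1, p 0⟩ with hz
    have hz0 : z ≠ 0 := by
      intro hc
      apply hp
      have h0 : p 0 = 0 := congrArg Complex.im hc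
      have h1 : p 1 = 0 := congrArg Complex.re hc
      rw [h0, h1]
      ring
    set r := ‖z‖ with hr
    have hrpos : 0 < r := norm_pos_iff.mpr hz0
    have hsin : Real.sin (Complex.arg z) = p 0 / r := by
      rw [Complex.sin_arg]
    have hcos : Real.cos (Complex.arg z) = p 1 / r := by
      rw [Complex.cos_arg hz0]
    have hx : p 0 = r * Real.sin (Complex.arg z) := by
      rw [hsin]; field_simp
    have hy : p 1 = r * Real.cos (Complex.arg z) := by
      rw [hcos]; field_simp
    have hsum : ∑ h ∈ Finset.range (δ + 1),
        v h * (δ.choose h : ℝ) * p 0 ^ h * p 1 ^ (δ - h)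
        = r ^ δ * Tfun δ v (Complex.arg z) := by
      rw [Tfun, Finset.mul_sum]
      refine Finset.sum_congr rfl fun h hh => ?_
      have hle : h ≤ δ := Nat.lt_succ_iff.mp (Finset.mem_range.mp hh)
      rw [hx, hy, mul_pow, mul_pow,
        show r ^ δ = r ^ h * r ^ (δ - h) by rw [← pow_add]; congr 1; omega]
      ring
    rw [hsum, hzero]
    ring

end
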